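/- For f(x), g(x) ∈ F₂[x] of degree at most n−1 with coefficients f_i, g_i, the coefficient c_{2n−2−k} of x^{2n−2−k} in f(x)·g(x), for 0 ≤ k ≤ n−1, satisfies c_{2n−2−k} = Σ_{i=n−1−k}^{n−1} f_i·g_i + Σ_{i+j=2n−2−k, n>i>j} (f_i + f_j)·(g_i + g_j), with sums taken over F₂. -/

import Mathlib

open Polynomial

/-- Karatsuba-style rewriting over F₂ of a high-degree coefficient of `f·g`:
`c_{2n−2−k} = Σ_{i=n−1−k}^{n−1} f_i·g_i
  + Σ_{i+j=2n−2−k, n>i>j} (f_i+f_j)·(g_i+g_j)`. -/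
theorem correction_coefficient_formula (n k : ℕ) (hn : 1 ≤ n) (hk : k ≤ n - 1)
    (f g : Polynomial (ZMod 2))
    (hf : f.natDegree ≤ n - 1) (hg : g.natDegree ≤ n - 1) :
    (f * g).coeff (2 * n - 2 - k) =
      (∑ i ∈ Finset.Icc (n - 1 - k) (n - 1), f.coeff i * g.coeff i) +
      ∑ p ∈ (Finset.range n ×ˢ Finset.range n).filter
          (fun p => p.1 + p.2 = 2 * n - 2 - k ∧ p.2 < p.1),
        (f.coeff p.1 + f.coeff p.2) * (g.coeff p.1 + g.coeff p.2) := by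
  set L := 2 * n - 2 - k with hL
  set S := (Finset.range n ×ˢ Finset.range n).filter (fun p => p.1 + p.2 = L) with hS
  have hSmem : ∀ p : ℕ × ℕ, p ∈ S ↔ (p.1 < n ∧ p.2 < n) ∧ p.1 + p.2 = L := by
    intro p
    simp [hS, Finset.mem_filter, Finset.mem_product]
  -- rewrite the RHS filter as a filter of S
  have hfilt : (Finset.range n ×ˢ Finset.range n).filter
      (fun p => p.1 + p.2 = L ∧ p.2 < p.1) = S.filter (fun p => p.2 < p.1) := by
    rw [hS, Finset.filter_filter]
  -- coefficient as a sum over S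
  have h1 : (f * g).coeff L = ∑ p ∈ S, f.coeff p.1 * g.coeff p.2 := by
    rw [Polynomial.coeff_mul]
    refine (Finset.sum_subset ?_ ?_).symm
    · intro p hp
      rw [hSmem] at hp
      rw [Finset.HasAntidiagonal.mem_antidiagonal]
      exact hp.2
    · intro p hp hps
      rw [Finset.HasAntidiagonal.mem_antidiagonal] at hp
      rw [hSmem] at hps
      have hcase : n ≤ p.1 ∨ n ≤ p.2 := by omega
      rcases hcase with h | h
      · rw [Polynomial.coeff_eq_zero_of_natDegree_lt (show f.natDegree < p.1 by omega), zero_mul]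
      · rw [Polynomial.coeff_eq_zero_of_natDegree_lt (show g.natDegree < p.2 by omega), mul_zero]
  -- splitting a sum over S into three parts
  have e1 : (S.filter (fun p => ¬ p.2 < p.1)).filter (fun p => p.1 = p.2)
      = S.filter (fun p => p.1 = p.2) := by
    ext p
    simp only [Finset.mem_filter]
    constructor
    · rintro ⟨⟨h1, _⟩, h3⟩; exact ⟨h1, h3⟩
    · rintro ⟨h1, h3⟩; exact ⟨⟨h1, by omega⟩, h3⟩
  have e2 : (S.filter (fun p => ¬ p.2 < p.1)).filter (fun p => ¬ p.1 = p.2)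
      = S.filter (fun p => p.1 < p.2) := by
    ext p
    simp only [Finset.mem_filter]
    constructor
    · rintro ⟨⟨h1, h2⟩, h3⟩; exact ⟨h1, by omega⟩
    · rintro ⟨h1, h3⟩; exact ⟨⟨h1, by omega⟩, by omega⟩
  have key : ∀ F : ℕ × ℕ → ZMod 2, ∑ p ∈ S, F p =
      (∑ p ∈ S.filter (fun p => p.2 < p.1), F p) +
      (∑ p ∈ S.filter (fun p => p.1 = p.2), F p) +
      (∑ p ∈ S.filter (fun p => p.1 < p.2), F p) := by
    intro F
    rw [← Finset.sum_filter_add_sum_filter_not S (fun p => p.2 < p.1) F, add_assoc]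
    congr 1
    rw [← Finset.sum_filter_add_sum_filter_not (S.filter (fun p => ¬ p.2 < p.1))
      (fun p => p.1 = p.2) F, e1, e2]
  -- swap bijection between the two strict parts
  have hswap : ∀ F : ℕ × ℕ → ZMod 2,
      ∑ p ∈ S.filter (fun p => p.1 < p.2), F p =
      ∑ p ∈ S.filter (fun p => p.2 < p.1), F p.swap := by
    intro F
    refine Finset.sum_nbij' (fun p => Prod.swap p) (fun p => Prod.swap p)
      ?_ ?_ ?_ ?_ ?_
    · intro p hp
      simp only [Finset.mem_filter, hSmem] at hp ⊢
      simp only [Prod.fst_swap, Prod.snd_swap]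
      omega
    · intro p hp
      simp only [Finset.mem_filter, hSmem] at hp ⊢
      simp only [Prod.fst_swap, Prod.snd_swap]
      omega
    · intro p _; simp
    · intro p _; simp
    · intro p _; rfl
  -- the diagonal sum over S equals the Icc sum
  have hdiag : ∑ p ∈ S, f.coeff p.1 * g.coeff p.1 =
      ∑ i ∈ Finset.Icc (n - 1 - k) (n - 1), f.coeff i * g.coeff i := by
    refine Finset.sum_nbij' (fun p => p.1) (fun i => (i, L - i)) ?_ ?_ ?_ ?_ ?_
    · intro p hp
      rw [hSmem] at hp
      rw [Finset.mem_Icc]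
      omega
    · intro i hi
      rw [Finset.mem_Icc] at hi
      rw [hSmem]
      dsimp only
      constructor
      · constructor <;> omega
      · omega
    · intro p hp
      rw [hSmem] at hp
      have : L - p.1 = p.2 := by omega
      simp [this]
    · intro i _; rfl
    · intro p _; rfl
  -- char 2 identity
  have hc2 : ∀ a b c d : ZMod 2,
      (a + b) * (c + d) + (a * c + b * d) = a * d + b * c := by decide
  rw [h1, hfilt, ← hdiag, key (fun p => f.coeff p.1 * g.coeff p.2),
    key (fun p => f.coeff p.1 * g.coeff p.1),
    hswap (fun p => f.coeff p.1 * g.coeff p.2),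
    hswap (fun p => f.coeff p.1 * g.coeff p.1)]
  simp only [Prod.fst_swap, Prod.snd_swap]
  have hEq : ∑ p ∈ S.filter (fun p => p.1 = p.2), f.coeff p.1 * g.coeff p.2 =
      ∑ p ∈ S.filter (fun p => p.1 = p.2), f.coeff p.1 * g.coeff p.1 := by
    refine Finset.sum_congr rfl ?_
    intro p hp
    simp only [Finset.mem_filter] at hp
    rw [← hp.2]
  rw [hEq]
  have main' :
      (∑ p ∈ S.filter (fun p => p.2 < p.1), f.coeff p.1 * g.coeff p.2) +
      (∑ p ∈ S.filter (fun p => p.2 < p.1), f.coeff p.2 * g.coeff p.1) =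
      (∑ p ∈ S.filter (fun p => p.2 < p.1), f.coeff p.1 * g.coeff p.1) +
      (∑ p ∈ S.filter (fun p => p.2 < p.1), f.coeff p.2 * g.coeff p.2) +
      ∑ p ∈ S.filter (fun p => p.2 < p.1),
        (f.coeff p.1 + f.coeff p.2) * (g.coeff p.1 + g.coeff p.2) := by
    rw [← Finset.sum_add_distrib, ← Finset.sum_add_distrib, ← Finset.sum_add_distrib]
    refine Finset.sum_congr rfl fun p _ => ?_
    have h2 : ∀ a b c d : ZMod 2, a * d + b * c = a * c + b * d + (a + b) * (c + d) := by
      decide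
    exact h2 _ _ _ _
  linear_combination main'
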